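/- For fixed u > 0, t > 0, the function c₂ ↦ t − t·c₂ + √α(u,t,c₂) is nonincreasing on [0,∞), where α(u,t,c₂) = c₂²t² − 2c₂t² + t² + 2tuc₂ + 2tu + u². Consequently the SINR gain (1−c₁)(t − tc₂ − u + √α)/(2c₁σ²) of the cascaded RIS link is nonincreasing in c₂ = K/L, i.e., nondecreasing in the number of RIS elements L. -/
import Mathlib


noncomputable def alphaFAS (u t c₂ : ℝ) : ℝ :=
  c₂ ^ 2 * t ^ 2 - 2 * c₂ * t ^ 2 + t ^ 2 + 2 * t * u * c₂ + 2 * t * u + u ^ 2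

lemma sqrt_alpha_step (u t : ℝ) (hu : 0 < u) (ht : 0 < t) {a b : ℝ}
    (ha : 0 ≤ a) (hab : a ≤ b) :
    Real.sqrt (alphaFAS u t b) ≤ Real.sqrt (alphaFAS u t a) + t * (b - a) := by
  set s := Real.sqrt (alphaFAS u t a) with hs
  have hαa : 0 ≤ alphaFAS u t a := by simp only [alphaFAS]; nlinarith [sq_nonneg ((a-1)*t + u)]
  have hs2 : s ^ 2 = alphaFAS u t a := Real.sq_sqrt hαa
  have hle : (a - 1) * t + u ≤ s := by
    have := Real.sqrt_le_sqrt (show ((a-1)*t + u)^2 ≤ alphaFAS u t a by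
      simp only [alphaFAS]; nlinarith)
    rw [Real.sqrt_sq_eq_abs] at this
    exact le_trans (le_abs_self _) this
  have hs0 : 0 ≤ s := Real.sqrt_nonneg _
  have hsum : 0 ≤ s + t * (b - a) := by nlinarith
  have key : alphaFAS u t b ≤ (s + t * (b - a)) ^ 2 := by
    simp only [alphaFAS] at hs2 ⊢; nlinarith [mul_le_mul_of_nonneg_right hle
      (mul_nonneg ht.le (sub_nonneg.2 hab))]
  calc Real.sqrt (alphaFAS u t b) ≤ Real.sqrt ((s + t * (b - a)) ^ 2) :=
        Real.sqrt_le_sqrt key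
    _ = s + t * (b - a) := by rw [Real.sqrt_sq hsum]

/-- The SINR gain of the cascaded RIS link is nonincreasing in `c₂ = K/L`
(hence nondecreasing in the number of RIS elements `L`). -/
theorem cascaded_gain_antitone (u t c₁ σ2 : ℝ) (hu : 0 < u) (ht : 0 < t)
    (hc₁ : 0 < c₁) (hc₁' : c₁ < 1) (hσ : 0 < σ2) :
    AntitoneOn (fun c₂ => t - t * c₂ + Real.sqrt (alphaFAS u t c₂)) (Set.Ici 0) ∧
    AntitoneOn (fun c₂ =>
        (1 - c₁) * (t - t * c₂ - u + Real.sqrt (alphaFAS u t c₂)) / (2 * c₁ * σ2))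
      (Set.Ici 0) := by
  have h1 : AntitoneOn (fun c₂ => t - t * c₂ + Real.sqrt (alphaFAS u t c₂)) (Set.Ici 0) := by
    intro a ha b hb hab
    have := sqrt_alpha_step u t hu ht ha hab
    simp only
    linarith
  refine ⟨h1, fun a ha b hb hab => ?_⟩
  have h := h1 ha hb hab
  simp only at h ⊢
  have hd : 0 < 2 * c₁ * σ2 := by positivity
  rw [div_le_div_iff₀ hd hd]
  nlinarith [mul_le_mul_of_nonneg_left h (mul_nonneg (by linarith : (0:ℝ) ≤ 1 - c₁) hd.le)]
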